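/- arXiv:1910.07056 — 4 statements merged into one kernel-verified Lean document; each statement's English description precedes it below -/
import Mathlib

section
/- Let φ : ℝⁿ → ℝ be convex, U and V symmetric positive semidefinite with U + V positive definite, a ∈ ℝⁿ, and f(x) = φ(x) + (1/2)‖x − a‖_V². Then prox_{f,U}(x) = prox_{φ, U+V}((U+V)⁻¹(Ux + Va)). -/
noncomputable section
open Matrix

/-- Euclidean dot product on `Fin n → ℝ`. -/
def dot {n : ℕ} (a b : Fin n → ℝ) : ℝ := ∑ i, a i * b i

lemma dot_eq {n : ℕ} (a b : Fin n → ℝ) : dot a b = a ⬝ᵥ b := rfl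

lemma dot_symm_mul {n : ℕ} {M : Matrix (Fin n) (Fin n) ℝ} (hM : Mᵀ = M)
    (u v : Fin n → ℝ) : dot u (M.mulVec v) = dot v (M.mulVec u) := by
  rw [dot_eq, dot_eq, Matrix.dotProduct_mulVec, ← Matrix.mulVec_transpose, hM,
    dotProduct_comm]

theorem prox_quadratic_regularization {n : ℕ} (φ : (Fin n → ℝ) → ℝ)
    (hφ : ConvexOn ℝ Set.univ φ)
    (U V : Matrix (Fin n) (Fin n) ℝ) (hU : U.PosSemidef) (hV : V.PosSemidef)
    (hUV : (U + V).PosDef) (a : Fin n → ℝ) (x : Fin n → ℝ) :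
    {y | IsMinOn (fun v => (φ v + (1 / 2) * dot (v - a) (V.mulVec (v - a)))
        + (1 / 2) * dot (x - v) (U.mulVec (x - v))) Set.univ y} =
    {y | IsMinOn (fun v => φ v + (1 / 2) *
        dot ((U + V)⁻¹.mulVec (U.mulVec x + V.mulVec a) - v)
            ((U + V).mulVec ((U + V)⁻¹.mulVec (U.mulVec x + V.mulVec a) - v)))
        Set.univ y} := by
  set M := U + V with hM
  set w : Fin n → ℝ := M⁻¹.mulVec (U.mulVec x + V.mulVec a) with hw
  have hdet : IsUnit M.det := isUnit_iff_ne_zero.mpr hUV.det_pos.ne'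
  have hkey : M.mulVec w = U.mulVec x + V.mulVec a := by
    rw [hw, Matrix.mulVec_mulVec, Matrix.mul_nonsing_inv M hdet, Matrix.one_mulVec]
  have hMs : Mᵀ = M := hUV.isHermitian
  have hUs : Uᵀ = U := hU.isHermitian
  have hVs : Vᵀ = V := hV.isHermitian
  -- the two objectives differ by a constant
  have hdiff : ∀ v : Fin n → ℝ,
      ((φ v + (1 / 2) * dot (v - a) (V.mulVec (v - a)))
        + (1 / 2) * dot (x - v) (U.mulVec (x - v)))
      = (φ v + (1 / 2) * dot (w - v) (M.mulVec (w - v)))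
        + ((1 / 2) * dot x (U.mulVec x) + (1 / 2) * dot a (V.mulVec a)
            - (1 / 2) * dot w (M.mulVec w)) := by
    intro v
    have e1 : dot (v - a) (V.mulVec (v - a))
        = dot v (V.mulVec v) - 2 * dot v (V.mulVec a) + dot a (V.mulVec a) := by
      simp only [dot_eq, Matrix.mulVec_sub, dotProduct_sub,
        sub_dotProduct]
      have := dot_symm_mul hVs a v
      simp only [dot_eq] at this
      rw [this]; ring
    have e2 : dot (x - v) (U.mulVec (x - v))
        = dot x (U.mulVec x) - 2 * dot v (U.mulVec x) + dot v (U.mulVec v) := by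
      simp only [dot_eq, Matrix.mulVec_sub, dotProduct_sub,
        sub_dotProduct]
      have := dot_symm_mul hUs x v
      simp only [dot_eq] at this
      rw [this]; ring
    have e3 : dot (w - v) (M.mulVec (w - v))
        = dot w (M.mulVec w) - 2 * (dot v (U.mulVec x) + dot v (V.mulVec a))
          + (dot v (U.mulVec v) + dot v (V.mulVec v)) := by
      simp only [dot_eq, Matrix.mulVec_sub, dotProduct_sub,
        sub_dotProduct]
      have h1 := dot_symm_mul hMs w v
      simp only [dot_eq] at h1
      rw [h1, hkey]
      have h2 : v ⬝ᵥ (U.mulVec x + V.mulVec a)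
          = v ⬝ᵥ U.mulVec x + v ⬝ᵥ V.mulVec a := dotProduct_add v _ _
      have h3 : v ⬝ᵥ M.mulVec v = v ⬝ᵥ U.mulVec v + v ⬝ᵥ V.mulVec v := by
        rw [hM, Matrix.add_mulVec, dotProduct_add]
      rw [h2, h3]; ring
    rw [e1, e2, e3]; ring
  ext y
  simp only [Set.mem_setOf_eq, isMinOn_iff, Set.mem_univ, forall_true_left]
  constructor
  · intro h v
    have := h v
    rw [hdiff y, hdiff v] at this
    linarith
  · intro h v
    have := h v
    rw [hdiff y, hdiff v]
    linarith
end
end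

section
/- Let A ∈ ℝ^{n×n} be invertible, b ∈ ℝⁿ, φ : ℝⁿ → ℝ convex, U symmetric positive definite, and f(x) = φ(Ax + b). Then prox_{f,U}(x) = A⁻¹(prox_{φ, A⁻ᵀ U A⁻¹}(Ax + b) − b). -/
noncomputable section

open Matrix

theorem prox_affine_transformation {n : ℕ} (φ : (Fin n → ℝ) → ℝ)
    (hφ : ConvexOn ℝ Set.univ φ)
    (U A : Matrix (Fin n) (Fin n) ℝ) (hU : U.PosDef) (hA : IsUnit A.det)
    (b : Fin n → ℝ) (x : Fin n → ℝ) :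
    {y | IsMinOn (fun v => φ (A.mulVec v + b) + (1 / 2) * dot (x - v) (U.mulVec (x - v)))
        Set.univ y} =
    (fun w => A⁻¹.mulVec (w - b)) ''
      {w | IsMinOn (fun v => φ v + (1 / 2) * dot ((A.mulVec x + b) - v)
          (((A⁻¹)ᵀ * U * A⁻¹).mulVec ((A.mulVec x + b) - v))) Set.univ w} := by
  have hIA : A⁻¹ * A = 1 := Matrix.nonsing_inv_mul A hA
  have hAI : A * A⁻¹ = 1 := Matrix.mul_nonsing_inv A hA
  set f : (Fin n → ℝ) → ℝ :=
    fun v => φ (A.mulVec v + b) + (1 / 2) * dot (x - v) (U.mulVec (x - v)) with hf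
  set g : (Fin n → ℝ) → ℝ :=
    fun v => φ v + (1 / 2) * dot ((A.mulVec x + b) - v)
        (((A⁻¹)ᵀ * U * A⁻¹).mulVec ((A.mulVec x + b) - v)) with hg
  -- key change of variables identity: g (A v + b) = f v
  have key : ∀ v, g (A.mulVec v + b) = f v := by
    intro v
    have h1 : (A.mulVec x + b) - (A.mulVec v + b) = A.mulVec (x - v) := by
      rw [Matrix.mulVec_sub]; abel
    have h2 : ((A⁻¹)ᵀ * U * A⁻¹).mulVec (A.mulVec (x - v)) =
        (A⁻¹)ᵀ.mulVec (U.mulVec (x - v)) := by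
      rw [Matrix.mulVec_mulVec, Matrix.mul_assoc ((A⁻¹)ᵀ * U), hIA, Matrix.mul_one,
        ← Matrix.mulVec_mulVec]
    have h3 : dot (A.mulVec (x - v)) ((A⁻¹)ᵀ.mulVec (U.mulVec (x - v))) =
        dot (x - v) (U.mulVec (x - v)) := by
      rw [dot_eq, dot_eq, Matrix.dotProduct_mulVec, Matrix.vecMul_transpose,
        Matrix.mulVec_mulVec, hIA, Matrix.one_mulVec]
    simp only [hg, hf, h1, h2, h3]
  -- every point is of the form A v + b
  have surj : ∀ w : Fin n → ℝ, A.mulVec (A⁻¹.mulVec (w - b)) + b = w := by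
    intro w
    rw [Matrix.mulVec_mulVec, hAI, Matrix.one_mulVec]
    abel
  have inv' : ∀ v : Fin n → ℝ, A⁻¹.mulVec ((A.mulVec v + b) - b) = v := by
    intro v
    simp [Matrix.mulVec_mulVec, hIA]
  ext y
  simp only [Set.mem_setOf_eq, Set.mem_image, isMinOn_univ_iff]
  constructor
  · intro hy
    refine ⟨A.mulVec y + b, ?_, inv' y⟩
    intro w
    have := hy (A⁻¹.mulVec (w - b))
    rw [key y]
    calc f y ≤ f (A⁻¹.mulVec (w - b)) := this
      _ = g w := by rw [← key, surj]
  · rintro ⟨w, hw, rfl⟩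
    intro v
    have h1 : f (A⁻¹.mulVec (w - b)) = g w := by rw [← key, surj]
    rw [h1, ← key v]
    exact hw _
end
end

section
/- (Scaled prox of simplex constraint) Let g be the convex indicator of the probability simplex {x : x ≥ 0, Σᵢ xᵢ = 1}, U = diag(u) with uᵢ > 0, and y ∈ ℝⁿ. Suppose ν ∈ ℝ satisfies Σᵢ max(yᵢ − ν/uᵢ, 0) = 1. Then the vector x with xᵢ = max(yᵢ − ν/uᵢ, 0) is the unique minimizer of (1/2)Σᵢ uᵢ(yᵢ − vᵢ)² over the simplex, i.e., x = prox_{g,U}(y). -/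
noncomputable section

theorem scaled_prox_simplex {n : ℕ} (u : Fin n → ℝ) (hu : ∀ i, 0 < u i)
    (y : Fin n → ℝ) (ν : ℝ) (hν : ∑ i, max (y i - ν / u i) 0 = 1)
    (xstar : Fin n → ℝ) (hxstar : ∀ i, xstar i = max (y i - ν / u i) 0) :
    xstar ∈ {v : Fin n → ℝ | (∀ i, 0 ≤ v i) ∧ ∑ i, v i = 1} ∧
    IsMinOn (fun v : Fin n → ℝ => (1 / 2) * ∑ i, u i * (y i - v i) ^ 2)
      {v | (∀ i, 0 ≤ v i) ∧ ∑ i, v i = 1} xstar ∧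
    (∀ w ∈ {v : Fin n → ℝ | (∀ i, 0 ≤ v i) ∧ ∑ i, v i = 1},
      IsMinOn (fun v : Fin n → ℝ => (1 / 2) * ∑ i, u i * (y i - v i) ^ 2)
        {v | (∀ i, 0 ≤ v i) ∧ ∑ i, v i = 1} w → w = xstar) := by
  have hx0 : ∀ i, 0 ≤ xstar i := fun i => (hxstar i) ▸ le_max_right _ _
  have hxsum : ∑ i, xstar i = 1 := by simp_rw [hxstar]; exact hν
  have hmem : xstar ∈ {v : Fin n → ℝ | (∀ i, 0 ≤ v i) ∧ ∑ i, v i = 1} := ⟨hx0, hxsum⟩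
  have key : ∀ v : Fin n → ℝ, (∀ i, 0 ≤ v i) → ∑ i, v i = 1 →
      (1 / 2) * ∑ i, u i * (y i - xstar i) ^ 2
        + (1 / 2) * ∑ i, u i * (v i - xstar i) ^ 2
        ≤ (1 / 2) * ∑ i, u i * (y i - v i) ^ 2 := by
    intro v hv hvs
    have hterm : ∀ i, 0 ≤ (u i * (xstar i - y i) + ν) * (v i - xstar i) := by
      intro i
      rcases le_or_gt (y i - ν / u i) 0 with h | h
      · have hx : xstar i = 0 := by rw [hxstar i, max_eq_right h]
        have h1 : u i * y i ≤ ν := by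
          have h2 : y i ≤ ν / u i := by linarith
          have h3 : y i * u i ≤ ν := (le_div_iff₀ (hu i)).mp h2
          linarith
        apply mul_nonneg
        · rw [hx]; nlinarith
        · rw [hx]; simpa using hv i
      · have hx : xstar i = y i - ν / u i := by rw [hxstar i, max_eq_left h.le]
        have hz : u i * (xstar i - y i) + ν = 0 := by
          rw [hx]
          have hne := (hu i).ne'
          field_simp
          ring
        rw [hz, zero_mul]
    have hsum0 : 0 ≤ ∑ i, (u i * (xstar i - y i) + ν) * (v i - xstar i) :=
      Finset.sum_nonneg fun i _ => hterm i
    have hid : ∑ i, u i * (y i - v i) ^ 2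
        = ∑ i, u i * (y i - xstar i) ^ 2 + ∑ i, u i * (v i - xstar i) ^ 2
          + 2 * (∑ i, (u i * (xstar i - y i) + ν) * (v i - xstar i))
          - 2 * ν * ((∑ i, v i) - ∑ i, xstar i) := by
      rw [← Finset.sum_sub_distrib, Finset.mul_sum, ← Finset.sum_add_distrib,
        Finset.mul_sum, ← Finset.sum_add_distrib, ← Finset.sum_sub_distrib]
      exact Finset.sum_congr rfl fun i _ => by ring
    rw [hvs, hxsum] at hid
    linarith
  refine ⟨hmem, ?_, ?_⟩
  · rw [isMinOn_iff]
    intro v hvm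
    obtain ⟨hv, hvs⟩ := hvm
    have h1 := key v hv hvs
    have h2 : 0 ≤ ∑ i, u i * (v i - xstar i) ^ 2 :=
      Finset.sum_nonneg fun i _ => mul_nonneg (hu i).le (sq_nonneg _)
    linarith
  · intro w hwm hwmin
    obtain ⟨hw, hws⟩ := hwm
    have h1 := key w hw hws
    have h2 := (isMinOn_iff.mp hwmin) xstar hmem
    have h3 : ∑ i, u i * (w i - xstar i) ^ 2 ≤ 0 := by linarith
    have h4 : ∀ i ∈ Finset.univ, u i * (w i - xstar i) ^ 2 = 0 := by
      rw [← Finset.sum_eq_zero_iff_of_nonneg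
        (fun i _ => mul_nonneg (hu i).le (sq_nonneg _))]
      exact le_antisymm h3 (Finset.sum_nonneg fun i _ => mul_nonneg (hu i).le (sq_nonneg _))
    funext i
    have := h4 i (Finset.mem_univ i)
    have h5 : (w i - xstar i) ^ 2 = 0 := by
      rcases mul_eq_zero.mp this with h | h
      · exact absurd h (hu i).ne'
      · exact h
    have := pow_eq_zero_iff (n := 2) (by norm_num) |>.mp h5
    linarith [sub_eq_zero.mp this]
end
end

section
/- (Key descent inequality) Let f : ℝⁿ → ℝ be convex, differentiable, L-smooth, and m-strongly convex (m ≥ 0), and g : ℝⁿ → ℝ convex. Let U be symmetric with U ⪰ L·I. Given x, let x⁺ = prox_{g,U}(x − U⁻¹∇f(x)) and define G_U(x) = U(x − x⁺). Then for all z ∈ ℝⁿ: F(x⁺) ≤ F(z) + ⟨G_U(x), x − z⟩ − (m/2)‖z − x‖₂² − (1/2)‖G_U(x)‖²_{U⁻¹}, where F = f + g and ‖p‖²_{U⁻¹} = pᵀU⁻¹p. -/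
/-!
Three inequalities are added up. The descent lemma bounds `f x⁺` by the linearisation of `f` at
`x` plus `(L/2)‖x⁺ - x‖²`, which `U ⪰ L • 1` turns into `(1/2)⟪x - x⁺, U (x - x⁺)⟫`; strong
convexity bounds `f z` from below by the linearisation at `x` plus `(m/2)‖z - x‖²`; and the
optimality of `x⁺` for the prox objective says that `G_U(x) - ∇f(x)` is a subgradient of `g` at
`x⁺`. In the sum all terms in `∇f(x)` cancel. The two bounds on `f` come from integrating the
gradient along a segment; the subgradient inequality from comparing the prox objective at `x⁺`
and at `x⁺ + t (z - x⁺)` and letting `t → 0`.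
-/

noncomputable section

/-- Squared Euclidean norm. -/
def sqnorm {n : ℕ} (a : Fin n → ℝ) : ℝ := dot a a

open Matrix Set Filter Topology

section Euclidean

variable {n : ℕ}

lemma dot_eq_dotProduct (a b : Fin n → ℝ) : dot a b = a ⬝ᵥ b := rfl

lemma sqnorm_eq_dotProduct (a : Fin n → ℝ) : sqnorm a = a ⬝ᵥ a := rfl

lemma sqnorm_nonneg (a : Fin n → ℝ) : 0 ≤ sqnorm a :=
  show 0 ≤ ∑ i, a i * a i from Finset.sum_nonneg fun i _ => mul_self_nonneg (a i)

lemma sqnorm_smul (t : ℝ) (a : Fin n → ℝ) : sqnorm (t • a) = t ^ 2 * sqnorm a := by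
  simp only [sqnorm_eq_dotProduct, dotProduct_smul, smul_dotProduct, smul_eq_mul]
  ring

lemma dot_le_sqrt_sqnorm_mul_sqrt_sqnorm (a b : Fin n → ℝ) :
    dot a b ≤ √(sqnorm a) * √(sqnorm b) := by
  simpa only [dot, sqnorm, sq] using Real.sum_mul_le_sqrt_mul_sqrt Finset.univ a b

end Euclidean

lemma le_of_forall_le_add_mul {a b c : ℝ} (h : ∀ t ∈ Ioc (0 : ℝ) 1, a ≤ b + t * c) : a ≤ b := by
  have hlim : Tendsto (fun t : ℝ => b + t * c) (𝓝[>] 0) (𝓝 b) := by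
    have : Tendsto (fun t : ℝ => b + t * c) (𝓝 0) (𝓝 (b + 0 * c)) :=
      tendsto_const_nhds.add (tendsto_id.mul_const c)
    simpa using this.mono_left nhdsWithin_le_nhds
  exact ge_of_tendsto hlim (eventually_of_mem (Ioc_mem_nhdsGT zero_lt_one) h)

lemma le_add_deriv_add_of_deriv_sub_le {φ φ' : ℝ → ℝ} {c : ℝ}
    (hφ : ∀ t, HasDerivAt φ (φ' t) t) (hφ' : ∀ t ∈ Ioo (0 : ℝ) 1, φ' t - φ' 0 ≤ c * t) :
    φ 1 ≤ φ 0 + φ' 0 + c / 2 := by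
  set ψ : ℝ → ℝ := fun t => φ t - t * φ' 0 - c / 2 * t ^ 2
  have hψ : ∀ t, HasDerivAt ψ (φ' t - φ' 0 - c * t) t := fun t =>
    (((hφ t).sub ((hasDerivAt_id t).mul_const (φ' 0))).sub
      ((hasDerivAt_pow 2 t).const_mul (c / 2))).congr_deriv (by norm_num; ring)
  have hanti : AntitoneOn ψ (Icc 0 1) := by
    refine antitoneOn_of_deriv_nonpos (convex_Icc 0 1)
      (fun t _ => (hψ t).continuousAt.continuousWithinAt)
      (fun t _ => (hψ t).differentiableAt.differentiableWithinAt) fun t ht => ?_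
    rw [interior_Icc] at ht
    rw [(hψ t).deriv]
    linarith [hφ' t ht]
  have := hanti (left_mem_Icc.2 zero_le_one) (right_mem_Icc.2 zero_le_one) zero_le_one
  simp only [ψ] at this
  linarith

section Gradient

variable {n : ℕ} {f : (Fin n → ℝ) → ℝ} {f' : (Fin n → ℝ) → (Fin n → ℝ)}

lemma hasDerivAt_apply_add_smul
    (hdiff : ∀ x v, HasDerivAt (fun t : ℝ => f (x + t • v)) (dot (f' x) v) 0)
    (x v : Fin n → ℝ) (t : ℝ) :
    HasDerivAt (fun s : ℝ => f (x + s • v)) (dot (f' (x + t • v)) v) t := by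
  have h := HasDerivAt.comp_sub_const t t (by rw [sub_self]; exact hdiff (x + t • v) v)
  simp only [sub_smul, add_add_sub_cancel] at h
  exact h

lemma apply_add_le_of_lipschitz_gradient {L : ℝ}
    (hdiff : ∀ x v, HasDerivAt (fun t : ℝ => f (x + t • v)) (dot (f' x) v) 0)
    (hsmooth : ∀ x y, √(sqnorm (f' x - f' y)) ≤ L * √(sqnorm (x - y)))
    (x v : Fin n → ℝ) :
    f (x + v) ≤ f x + dot (f' x) v + L / 2 * sqnorm v := by
  have h := le_add_deriv_add_of_deriv_sub_le (c := L * sqnorm v)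
    (hasDerivAt_apply_add_smul hdiff x v) fun t ht => by
      have hlip := hsmooth (x + t • v) x
      rw [add_sub_cancel_left, sqnorm_smul, Real.sqrt_mul (sq_nonneg t), Real.sqrt_sq ht.1.le]
        at hlip
      calc dot (f' (x + t • v)) v - dot (f' (x + (0 : ℝ) • v)) v
          = dot (f' (x + t • v) - f' x) v := by
            simp only [zero_smul, add_zero, dot_eq_dotProduct, sub_dotProduct]
        _ ≤ √(sqnorm (f' (x + t • v) - f' x)) * √(sqnorm v) :=
            dot_le_sqrt_sqnorm_mul_sqrt_sqnorm _ _
        _ ≤ L * (t * √(sqnorm v)) * √(sqnorm v) := by gcongr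
        _ = L * sqnorm v * t := by
            rw [mul_assoc, mul_assoc, Real.mul_self_sqrt (sqnorm_nonneg v)]
            ring
  simp only [one_smul, zero_smul, add_zero] at h
  linarith

lemma le_apply_add_of_strongly_monotone_gradient {m : ℝ}
    (hdiff : ∀ x v, HasDerivAt (fun t : ℝ => f (x + t • v)) (dot (f' x) v) 0)
    (hstrong : ∀ x y, m * sqnorm (x - y) ≤ dot (f' x - f' y) (x - y))
    (x v : Fin n → ℝ) :
    f x + dot (f' x) v + m / 2 * sqnorm v ≤ f (x + v) := by
  have h := le_add_deriv_add_of_deriv_sub_le (c := -(m * sqnorm v))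
    (fun t => (hasDerivAt_apply_add_smul hdiff x v t).neg) fun t ht => by
      have hmono := hstrong (x + t • v) x
      rw [add_sub_cancel_left, sqnorm_smul, dot_eq_dotProduct, dotProduct_smul, smul_eq_mul,
        sub_dotProduct] at hmono
      simp only [zero_smul, add_zero, dot_eq_dotProduct]
      nlinarith [ht.1]
  simp only [Pi.neg_apply, one_smul, zero_smul, add_zero] at h
  linarith

end Gradient

section Matrix

variable {n : ℕ} {U : Matrix (Fin n) (Fin n) ℝ}

lemma dot_mulVec_comm_of_isSymm (hU : U.IsSymm) (p q : Fin n → ℝ) :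
    dot (U *ᵥ p) q = dot p (U *ᵥ q) := by
  rw [dot_eq_dotProduct, dot_eq_dotProduct, dotProduct_mulVec, ← vecMul_transpose, hU.eq]

lemma dot_sub_smul_mulVec_sub_smul (hU : U.IsSymm) (a b : Fin n → ℝ) (t : ℝ) :
    dot (a - t • b) (U *ᵥ (a - t • b))
      = dot a (U *ᵥ a) - 2 * t * dot (U *ᵥ a) b + t ^ 2 * dot b (U *ᵥ b) := by
  have hsymm : a ⬝ᵥ U *ᵥ b = b ⬝ᵥ U *ᵥ a := by
    rw [← dot_eq_dotProduct, ← dot_mulVec_comm_of_isSymm hU, dot_eq_dotProduct, dotProduct_comm]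
  simp only [dot_eq_dotProduct, mulVec_sub, mulVec_smul, dotProduct_sub, sub_dotProduct,
    dotProduct_smul, smul_dotProduct, smul_eq_mul]
  rw [hsymm, dotProduct_comm (U *ᵥ a) b]
  ring

lemma mul_sqnorm_le_dot_mulVec {L : ℝ} (hUL : (U - L • 1).PosSemidef) (d : Fin n → ℝ) :
    L * sqnorm d ≤ dot d (U *ᵥ d) := by
  have h := hUL.dotProduct_mulVec_nonneg d
  simp only [star_trivial, sub_mulVec, smul_mulVec, one_mulVec, dotProduct_sub,
    dotProduct_smul, smul_eq_mul] at h
  rw [sqnorm_eq_dotProduct, dot_eq_dotProduct]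
  linarith

lemma posDef_of_posSemidef_sub_smul_one {L : ℝ} (hL : 0 < L) (hUL : (U - L • 1).PosSemidef) :
    U.PosDef := by
  simpa using PosDef.posSemidef_add hUL (PosDef.one.smul hL)

lemma mulVec_nonsing_inv_mulVec (hU : IsUnit U.det) (p : Fin n → ℝ) : U *ᵥ (U⁻¹ *ᵥ p) = p := by
  rw [mulVec_mulVec, mul_nonsing_inv U hU, one_mulVec]

lemma nonsing_inv_mulVec_mulVec (hU : IsUnit U.det) (p : Fin n → ℝ) : U⁻¹ *ᵥ (U *ᵥ p) = p := by
  rw [mulVec_mulVec, nonsing_inv_mul U hU, one_mulVec]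

end Matrix

theorem ConvexOn.subgradient_ineq_of_isMinOn_prox {n : ℕ} {g : (Fin n → ℝ) → ℝ}
    {U : Matrix (Fin n) (Fin n) ℝ} {w p : Fin n → ℝ} (hg : ConvexOn ℝ univ g) (hU : U.IsSymm)
    (hp : IsMinOn (fun v => g v + 1 / 2 * dot (w - v) (U *ᵥ (w - v))) univ p) (z : Fin n → ℝ) :
    g p + dot (U *ᵥ (w - p)) (z - p) ≤ g z := by
  set B := dot (U *ᵥ (w - p)) (z - p)
  set C := dot (z - p) (U *ᵥ (z - p))
  suffices ∀ t ∈ Ioc (0 : ℝ) 1, g p + B ≤ g z + t * (C / 2) from le_of_forall_le_add_mul this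
  rintro t ⟨ht0, ht1⟩
  have hmin := isMinOn_iff.1 hp _ (mem_univ (p + t • (z - p)))
  have hconv : g (p + t • (z - p)) ≤ (1 - t) * g p + t * g z := by
    rw [show p + t • (z - p) = (1 - t) • p + t • z by module]
    exact hg.2 (mem_univ p) (mem_univ z) (sub_nonneg.2 ht1) ht0.le (sub_add_cancel 1 t)
  simp only [sub_add_eq_sub_sub, dot_sub_smul_mulVec_sub_smul hU] at hmin
  have hscaled : t * (g p + B) ≤ t * (g z + t * (C / 2)) := by linarith
  exact le_of_mul_le_mul_left hscaled ht0

theorem key_descent_inequality_general {n : ℕ} (f g : (Fin n → ℝ) → ℝ)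
    (f' : (Fin n → ℝ) → (Fin n → ℝ)) (L m : ℝ) (hL : 0 < L)
    (hgconv : ConvexOn ℝ Set.univ g)
    (hdiff : ∀ x v, HasDerivAt (fun t : ℝ => f (x + t • v)) (dot (f' x) v) 0)
    (hsmooth : ∀ x y, Real.sqrt (sqnorm (f' x - f' y)) ≤ L * Real.sqrt (sqnorm (x - y)))
    (hstrong : ∀ x y, m * sqnorm (x - y) ≤ dot (f' x - f' y) (x - y))
    (U : Matrix (Fin n) (Fin n) ℝ) (hUsymm : U.IsSymm)
    (hUL : (U - L • (1 : Matrix (Fin n) (Fin n) ℝ)).PosSemidef)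
    (x xplus : Fin n → ℝ)
    (hxplus : IsMinOn (fun v => g v + (1 / 2) *
        dot ((x - U⁻¹.mulVec (f' x)) - v) (U.mulVec ((x - U⁻¹.mulVec (f' x)) - v)))
      Set.univ xplus) :
    ∀ z, f xplus + g xplus ≤
      (f z + g z) + dot (U.mulVec (x - xplus)) (x - z) - (m / 2) * sqnorm (z - x)
        - (1 / 2) * dot (U.mulVec (x - xplus)) (U⁻¹.mulVec (U.mulVec (x - xplus))) := by
  intro z
  have hU : IsUnit U.det :=
    (isUnit_iff_isUnit_det U).1 (posDef_of_posSemidef_sub_smul_one hL hUL).isUnit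
  set d := x - xplus with hd
  have hprox := hgconv.subgradient_ineq_of_isMinOn_prox hUsymm hxplus z
  rw [show x - U⁻¹ *ᵥ f' x - xplus = d - U⁻¹ *ᵥ f' x by rw [hd]; abel, mulVec_sub,
    mulVec_nonsing_inv_mulVec hU, show z - xplus = (z - x) + d by rw [hd]; abel] at hprox
  have hdescent := apply_add_le_of_lipschitz_gradient hdiff hsmooth x (-d)
  rw [show x + -d = xplus by rw [hd]; abel] at hdescent
  have hlower := le_apply_add_of_strongly_monotone_gradient hdiff hstrong x (z - x)
  rw [add_sub_cancel] at hlower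
  have hUd := mul_sqnorm_le_dot_mulVec hUL d
  rw [nonsing_inv_mulVec_mulVec hU, ← neg_sub z x]
  simp only [dot_eq_dotProduct, sqnorm_eq_dotProduct, sub_dotProduct, dotProduct_add,
    dotProduct_neg, neg_dotProduct, dotProduct_comm d (U *ᵥ d)] at hprox hdescent hlower hUd ⊢
  linarith

theorem key_descent_inequality {n : ℕ} (f g : (Fin n → ℝ) → ℝ)
    (f' : (Fin n → ℝ) → (Fin n → ℝ)) (L m : ℝ) (hL : 0 < L) (hm : 0 ≤ m)
    (hfconv : ConvexOn ℝ Set.univ f) (hgconv : ConvexOn ℝ Set.univ g)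
    (hdiff : ∀ x v, HasDerivAt (fun t : ℝ => f (x + t • v)) (dot (f' x) v) 0)
    (hsmooth : ∀ x y, Real.sqrt (sqnorm (f' x - f' y)) ≤ L * Real.sqrt (sqnorm (x - y)))
    (hstrong : ∀ x y, m * sqnorm (x - y) ≤ dot (f' x - f' y) (x - y))
    (U : Matrix (Fin n) (Fin n) ℝ) (hUsymm : U.IsSymm)
    (hUL : (U - L • (1 : Matrix (Fin n) (Fin n) ℝ)).PosSemidef)
    (x xplus : Fin n → ℝ)
    (hxplus : IsMinOn (fun v => g v + (1 / 2) *
        dot ((x - U⁻¹.mulVec (f' x)) - v) (U.mulVec ((x - U⁻¹.mulVec (f' x)) - v)))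
      Set.univ xplus) :
    ∀ z, f xplus + g xplus ≤
      (f z + g z) + dot (U.mulVec (x - xplus)) (x - z) - (m / 2) * sqnorm (z - x)
        - (1 / 2) * dot (U.mulVec (x - xplus)) (U⁻¹.mulVec (U.mulVec (x - xplus))) :=
  key_descent_inequality_general f g f' L m hL hgconv hdiff hsmooth hstrong U hUsymm hUL x xplus
    hxplus
end
end
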